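/- arXiv:1810.08762 — 2 statements merged into one kernel-verified Lean document; each statement's English description precedes it below -/
import Mathlib

section
/- Let G be a group with finite generating set S not containing the identity, and let T : G → G be an isometry from (G, d_C) to (G, d_W), i.e. d_W(T(g), T(h)) = d_C(g, h) for all g, h ∈ G. Then the map T̃ = L_{T(e)⁻¹} ∘ T (where e is the identity of G and L_a(h) = ah) satisfies: (i) T = L_{T(e)} ∘ T̃; (ii) T̃ is an isometry from (G, d_C) to (G, d_W) with T̃(e) = e; (iii) T̃(S) ⊆ S ∪ S⁻¹; and (iv) T̃ is nonexpansive on (G, d_W), i.e. d_W(T̃(g), T̃(h)) ≤ d_W(g, h) for all g, h ∈ G. -/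
/-- The cardinal norm of `g` with respect to a generating set `S`. -/
noncomputable def cardNorm {G : Type*} [Group G] (S : Set G) (g : G) : ℕ :=
  sInf {n : ℕ | ∃ A : Finset G, (A : Set G) ⊆ S ∧
    g ∈ Subgroup.closure (A : Set G) ∧ A.card = n}

/-- The word norm of `g` with respect to a generating set `S`: the least
length of an expression of `g` as a product of elements of `S ∪ S⁻¹`. -/
noncomputable def wordNorm {G : Type*} [Group G] (S : Set G) (g : G) : ℕ :=
  sInf {n : ℕ | ∃ l : List G, (∀ x ∈ l, x ∈ S ∨ x⁻¹ ∈ S) ∧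
    l.prod = g ∧ l.length = n}

/-- The cardinal metric `d_C(g, h) = ‖g⁻¹h‖`. -/
noncomputable def cardDist {G : Type*} [Group G] (S : Set G) (g h : G) : ℕ :=
  cardNorm S (g⁻¹ * h)

/-- The word metric `d_W(g, h)`. -/
noncomputable def wordDist {G : Type*} [Group G] (S : Set G) (g h : G) : ℕ :=
  wordNorm S (g⁻¹ * h)

/-!
Left multiplication is an isometry of the word metric, so `T̃ = L_{T(e)⁻¹} ∘ T` is again an
isometry `d_C → d_W`, and it fixes `e`. A generator `s ∈ S` has cardinal norm `1`, so `T̃ s` has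
word norm `1`, i.e. it is a one-letter word, an element of `S ∪ S⁻¹`. Finally `‖g‖ ≤ |g|_W`:
replacing each letter of a word for `g` by the generator it equals or inverts gives a subset of
`S` of at most that many elements generating `g`; hence `d_W(T̃ g, T̃ h) = d_C(g, h) ≤ d_W(g, h)`.
-/

section

variable {G : Type*} [Group G] (S : Set G)

theorem wordDist_mul_left (a g h : G) : wordDist S (a * g) (a * h) = wordDist S g h := by
  rw [wordDist, wordDist, mul_inv_rev, mul_assoc, inv_mul_cancel_left]

theorem exists_list_of_mem_subgroupClosure {g : G} (hg : g ∈ Subgroup.closure S) :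
    ∃ l : List G, (∀ x ∈ l, x ∈ S ∨ x⁻¹ ∈ S) ∧ l.prod = g := by
  rw [← Subgroup.mem_toSubmonoid, Subgroup.closure_toSubmonoid] at hg
  exact Submonoid.exists_list_of_mem_closure hg

theorem cardNorm_le_length (l : List G) (hl : ∀ x ∈ l, x ∈ S ∨ x⁻¹ ∈ S) :
    cardNorm S l.prod ≤ l.length := by
  classical
  let rep : G → G := fun x => if x ∈ S then x else x⁻¹
  let A : Finset G := l.toFinset.image rep
  have rep_mem_A {x : G} (hx : x ∈ l) : rep x ∈ (A : Set G) := by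
    simpa [A] using ⟨x, hx, rfl⟩
  have hAS : (A : Set G) ⊆ S := by
    intro y hy
    obtain ⟨x, hx, rfl⟩ : ∃ x ∈ l, rep x = y := by simpa [A] using hy
    by_cases h : x ∈ S
    · simp [rep, h]
    · simpa [rep, h] using (hl x hx).resolve_left h
  have hprod : l.prod ∈ Subgroup.closure (A : Set G) := by
    refine list_prod_mem fun x hx => ?_
    have hrep := Subgroup.subset_closure (rep_mem_A hx)
    by_cases h : x ∈ S
    · simpa [rep, h] using hrep
    · simpa [rep, h] using inv_mem hrep
  calc cardNorm S l.prod ≤ A.card := Nat.sInf_le ⟨A, hAS, hprod, rfl⟩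
    _ ≤ l.toFinset.card := Finset.card_image_le
    _ ≤ l.length := l.toFinset_card_le

theorem cardNorm_le_wordNorm (g : G) : cardNorm S g ≤ wordNorm S g := by
  by_cases hg : g ∈ Subgroup.closure S
  · obtain ⟨l, hl, rfl⟩ := exists_list_of_mem_subgroupClosure S hg
    have hne : {n | ∃ l' : List G, (∀ x ∈ l', x ∈ S ∨ x⁻¹ ∈ S) ∧
        l'.prod = l.prod ∧ l'.length = n}.Nonempty := ⟨_, l, hl, rfl, rfl⟩
    obtain ⟨l', hl', hprod, hlen⟩ := Nat.sInf_mem hne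
    rw [wordNorm, ← hlen, ← hprod]
    exact cardNorm_le_length S l' hl'
  · -- no finite `A ⊆ S` generates `g`, so `cardNorm S g = sInf ∅ = 0`
    refine (Nat.sInf_eq_zero.2 (Or.inr ?_)).trans_le (Nat.zero_le _)
    refine Set.eq_empty_of_forall_notMem fun n ⟨A, hAS, hgA, _⟩ => hg ?_
    exact Subgroup.closure_mono hAS hgA

theorem cardNorm_eq_one (hid : (1 : G) ∉ S) {s : G} (hs : s ∈ S) : cardNorm S s = 1 := by
  classical
  have hsingleton : ∃ A : Finset G, (A : Set G) ⊆ S ∧ s ∈ Subgroup.closure (A : Set G) ∧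
      A.card = 1 :=
    ⟨{s}, by simpa using hs, by simp [Subgroup.mem_closure_singleton_self], rfl⟩
  refine le_antisymm (Nat.sInf_le hsingleton) ?_
  rw [Nat.one_le_iff_ne_zero, Ne, cardNorm, Nat.sInf_eq_zero]
  rintro (⟨A, -, hsA, hA⟩ | hempty)
  · rw [Finset.card_eq_zero.1 hA, Finset.coe_empty, Subgroup.closure_empty,
      Subgroup.mem_bot] at hsA
    exact hid (hsA ▸ hs)
  · exact Set.eq_empty_iff_forall_notMem.1 hempty 1 hsingleton

theorem mem_union_inv_of_wordNorm_eq_one {g : G} (hg : wordNorm S g = 1) : g ∈ S ∪ S⁻¹ := by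
  obtain ⟨l, hl, rfl, hlen⟩ := Nat.sInf_mem (Nat.nonempty_of_sInf_eq_succ hg)
  rw [← wordNorm, hg] at hlen
  obtain ⟨x, rfl⟩ := List.length_eq_one_iff.1 hlen
  simpa using hl x (List.mem_singleton_self x)

end

theorem isometry_cardDist_to_wordDist_factorization_general
    {G : Type*} [Group G] (S : Set G)
    (hid : (1 : G) ∉ S)
    (T : G → G) (hT : ∀ g h : G, wordDist S (T g) (T h) = cardDist S g h) :
    (∀ g : G, T g = T 1 * ((T 1)⁻¹ * T g)) ∧
    (T 1)⁻¹ * T 1 = 1 ∧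
    (∀ g h : G,
      wordDist S ((T 1)⁻¹ * T g) ((T 1)⁻¹ * T h) = cardDist S g h) ∧
    (∀ s ∈ S, (T 1)⁻¹ * T s ∈ S ∪ S⁻¹) ∧
    (∀ g h : G,
      wordDist S ((T 1)⁻¹ * T g) ((T 1)⁻¹ * T h) ≤ wordDist S g h) := by
  have hisom : ∀ g h : G, wordDist S ((T 1)⁻¹ * T g) ((T 1)⁻¹ * T h) = cardDist S g h :=
    fun g h => (wordDist_mul_left S _ _ _).trans (hT g h)
  refine ⟨fun g => (mul_inv_cancel_left _ _).symm, inv_mul_cancel _, hisom, fun s hs => ?_,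
    fun g h => (hisom g h).trans_le (cardNorm_le_wordNorm S _)⟩
  apply mem_union_inv_of_wordNorm_eq_one
  simpa [wordDist, cardDist, cardNorm_eq_one S hid hs] using hisom 1 s

/-- Every isometry `T` from `(G, d_C)` to `(G, d_W)` factors as
`T = L_{T(e)} ∘ T̃`, where `T̃ = L_{T(e)⁻¹} ∘ T` is an isometry from
`(G, d_C)` to `(G, d_W)` preserving the identity, `T̃(S) ⊆ S ∪ S⁻¹`, and
`T̃` is nonexpansive on `(G, d_W)`. -/
theorem isometry_cardDist_to_wordDist_factorization
    {G : Type*} [Group G] (S : Set G)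
    (hgen : Subgroup.closure S = ⊤) (hid : (1 : G) ∉ S) (hS : S.Finite)
    (T : G → G) (hT : ∀ g h : G, wordDist S (T g) (T h) = cardDist S g h) :
    (∀ g : G, T g = T 1 * ((T 1)⁻¹ * T g)) ∧
    (T 1)⁻¹ * T 1 = 1 ∧
    (∀ g h : G,
      wordDist S ((T 1)⁻¹ * T g) ((T 1)⁻¹ * T h) = cardDist S g h) ∧
    (∀ s ∈ S, (T 1)⁻¹ * T s ∈ S ∪ S⁻¹) ∧
    (∀ g h : G,
      wordDist S ((T 1)⁻¹ * T g) ((T 1)⁻¹ * T h) ≤ wordDist S g h) :=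
  isometry_cardDist_to_wordDist_factorization_general S hid T hT
end

section
/- Let G be a group and S a generating set of G with the identity not in S. Suppose α : G → G is a bijection and σ is a permutation of S such that α(gc) = α(g)σ(c) for all g ∈ G and c ∈ S (i.e., α is a color-permuting automorphism of the Cayley color digraph of G with respect to S). Then α is an isometry of G with respect to the cardinal metric: d_C(α(g), α(h)) = d_C(g, h) for all g, h ∈ G. -/
/-!
A color-permuting map `α` with color permutation `τ` sends the path from `g` spelled by a word in
the colors `A` to the path from `α g` spelled by the same word in the colors `τ '' A`. Applied to
`α` and to `α⁻¹`, this gives `g⁻¹ h ∈ ⟨A⟩` iff `(α g)⁻¹ (α h) ∈ ⟨τ '' A⟩`. Since `τ` permutes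
`S` and preserves the size of finite sets, `g⁻¹ h` and `(α g)⁻¹ (α h)` have the same cardinal norm.
-/

section

variable {G : Type*} [Group G]

lemma inv_mul_apply_mul_mem_closure_image {α τ : G → G} {A : Set G}
    (hα : ∀ g, ∀ c ∈ A, α (g * c) = α g * τ c) {w : G} (hw : w ∈ Subgroup.closure A) (x : G) :
    (α x)⁻¹ * α (x * w) ∈ Subgroup.closure (τ '' A) := by
  induction hw using Subgroup.closure_induction generalizing x with
  | mem c hc =>
    rw [hα x c hc, inv_mul_cancel_left]
    exact Subgroup.subset_closure (Set.mem_image_of_mem τ hc)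
  | one => simp
  | mul a b _ _ iha ihb =>
    simpa only [mul_assoc, mul_inv_cancel_left] using mul_mem (iha x) (ihb (x * a))
  | inv a _ iha =>
    simpa [mul_assoc] using inv_mem (iha (x * a⁻¹))

lemma symm_mul_eq_of_forall_mul_eq {e : G ≃ G} {τ : Equiv.Perm G} {A : Set G}
    (he : ∀ g, ∀ c ∈ A, e (g * c) = e g * τ c) :
    ∀ g, ∀ c ∈ τ '' A, e.symm (g * c) = e.symm g * τ.symm c := by
  rintro g _ ⟨c, hc, rfl⟩
  apply e.injective
  rw [τ.symm_apply_apply, he _ c hc, e.apply_symm_apply, e.apply_symm_apply]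

lemma inv_mul_mem_closure_image_iff {e : G ≃ G} {τ : Equiv.Perm G} {A : Set G}
    (he : ∀ g, ∀ c ∈ A, e (g * c) = e g * τ c) (g h : G) :
    (e g)⁻¹ * e h ∈ Subgroup.closure (τ '' A) ↔ g⁻¹ * h ∈ Subgroup.closure A := by
  constructor
  · intro hmem
    have := inv_mul_apply_mul_mem_closure_image (symm_mul_eq_of_forall_mul_eq he) hmem (e g)
    simpa [Equiv.symm_image_image] using this
  · intro hmem
    simpa using inv_mul_apply_mul_mem_closure_image he hmem g

lemma cardNorm_eq_of_perm {S : Set G} (τ : Equiv.Perm G) (hτ : ∀ a, τ a ∈ S ↔ a ∈ S) {x y : G}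
    (hxy : ∀ A : Finset G, (A : Set G) ⊆ S →
      (y ∈ Subgroup.closure (τ '' A) ↔ x ∈ Subgroup.closure A)) :
    cardNorm S y = cardNorm S x := by
  have maps_to {τ' : Equiv.Perm G} (hτ' : ∀ a, τ' a ∈ S ↔ a ∈ S) {A : Finset G}
      (hA : (A : Set G) ⊆ S) : ((A.map τ'.toEmbedding : Finset G) : Set G) ⊆ S := by
    rw [Finset.coe_map]
    rintro _ ⟨a, ha, rfl⟩
    exact (hτ' a).2 (hA ha)
  unfold cardNorm
  congr 1
  ext n
  constructor
  · rintro ⟨B, hBS, hy, rfl⟩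
    have hτ_symm (a : G) : τ.symm a ∈ S ↔ a ∈ S := by rw [← hτ, τ.apply_symm_apply]
    have hAS := maps_to hτ_symm hBS
    refine ⟨B.map τ.symm.toEmbedding, hAS, ?_, Finset.card_map _⟩
    rw [← hxy _ hAS, Finset.coe_map]
    simpa [Equiv.image_symm_image] using hy
  · rintro ⟨A, hAS, hx, rfl⟩
    refine ⟨A.map τ.toEmbedding, maps_to hτ hAS, ?_, Finset.card_map _⟩
    simpa using (hxy A hAS).2 hx

end

theorem color_permuting_aut_isometry_cardDist_general {G : Type*} [Group G] (S : Set G)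
    (α : G → G) (hα : Function.Bijective α) (σ : S ≃ S)
    (hperm : ∀ (g : G) (c : S), α (g * c) = α g * (σ c : G)) :
    ∀ g h : G, cardDist S (α g) (α h) = cardDist S g h := by
  classical
  intro g h
  set e := Equiv.ofBijective α hα
  set τ := Equiv.Perm.ofSubtype σ
  have he : ∀ x, ∀ c ∈ S, e (x * c) = e x * τ c := fun x c hc => by
    simpa [e, τ, Equiv.Perm.ofSubtype_apply_of_mem σ hc] using hperm x ⟨c, hc⟩
  exact cardNorm_eq_of_perm τ (Equiv.Perm.ofSubtype_apply_mem_iff_mem σ) fun A hAS =>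
    inv_mul_mem_closure_image_iff (fun x c hc => he x c (hAS hc)) g h

/-- Color-permuting automorphisms of the Cayley color digraph of `(G, S)` are
isometries of `G` with respect to the cardinal metric. -/
theorem color_permuting_aut_isometry_cardDist {G : Type*} [Group G] (S : Set G)
    (hgen : Subgroup.closure S = ⊤) (hid : (1 : G) ∉ S)
    (α : G → G) (hα : Function.Bijective α) (σ : S ≃ S)
    (hperm : ∀ (g : G) (c : S), α (g * c) = α g * (σ c : G)) :
    ∀ g h : G, cardDist S (α g) (α h) = cardDist S g h :=
  color_permuting_aut_isometry_cardDist_general S α hα σ hperm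
end
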